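/- arXiv:1110.6449 — 3 statements merged into one kernel-verified Lean document; each statement's English description precedes it below -/
import Mathlib

section
/- Let $A$ be an $N \times N$ Hermitian matrix, $d > 0$, $\mathbf{v} \in \mathbb{C}^N$, and $B = A + d\, \mathbf{v}\mathbf{v}^*$. Then the eigenvalues interlace: $\lambda_1(A) \leq \lambda_1(B) \leq \lambda_2(A) \leq \lambda_2(B) \leq \cdots \leq \lambda_N(A) \leq \lambda_N(B)$, where $\lambda_1 \leq \cdots \leq \lambda_N$ denote the ordered eigenvalues. -/
open Module Submodule InnerProductSpace
open scoped InnerProductSpace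

/-!
If the quadratic form of `T` is at most `c ‖x‖²` on a subspace of dimension `> i`, then
`λ_i(T) ≤ c`: by dimension count that subspace meets the span of the eigenvectors
`b_i, b_{i+1}, …`, where the form is at least `λ_i ‖x‖²`. As `B - A` is positive semidefinite,
the span of the first `i + 1` eigenvectors of `B` gives `λ_i(A) ≤ λ_i(B)`. As the forms of `A` and
`B` agree on the hyperplane `v^⊥`, its intersection with the span of the first `i + 2`
eigenvectors of `A` gives `λ_i(B) ≤ λ_{i+1}(A)`.
-/

namespace OrthonormalBasis

variable {𝕜 E ι : Type*} [RCLike 𝕜] [NormedAddCommGroup E] [InnerProductSpace 𝕜 E] [Fintype ι]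
  (b : OrthonormalBasis ι 𝕜 E)

lemma mem_span_image_iff_repr_eq_zero {s : Set ι} {x : E} :
    x ∈ span 𝕜 (b '' s) ↔ ∀ j ∉ s, b.repr x j = 0 := by
  rw [← b.coe_toBasis, b.toBasis.mem_span_image]
  simp only [Set.subset_def, Finset.mem_coe, Finsupp.mem_support_iff,
    OrthonormalBasis.coe_toBasis_repr_apply]
  exact forall_congr' fun j => not_imp_comm

lemma finrank_span_image (s : Finset ι) : finrank 𝕜 (span 𝕜 (b '' s)) = s.card := by
  rw [Set.image_eq_range]
  exact (finrank_span_eq_card (b.orthonormal.linearIndependent.comp _ Subtype.val_injective)).trans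
    (Fintype.card_coe s)

variable {T : E →ₗ[𝕜] E} {μ : ι → ℝ}

lemma re_inner_map_self_eq_sum (hb : ∀ j, T (b j) = (μ j : 𝕜) • b j) (x : E) :
    RCLike.re ⟪x, T x⟫_𝕜 = ∑ j, μ j * ‖b.repr x j‖ ^ 2 := by
  have hTx : T x = ∑ j, ((μ j : 𝕜) * b.repr x j) • b j := by
    conv_lhs => rw [← b.sum_repr x]
    simp only [map_sum, map_smul, hb, smul_smul, mul_comm]
  have : ⟪x, T x⟫_𝕜 = ∑ j, ((μ j * ‖b.repr x j‖ ^ 2 : ℝ) : 𝕜) := by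
    rw [hTx, inner_sum]
    refine Finset.sum_congr rfl fun j _ => ?_
    rw [inner_smul_right, ← inner_conj_symm, ← b.repr_apply_apply, mul_assoc, RCLike.mul_conj]
    push_cast; rfl
  rw [this, map_sum]
  simp only [RCLike.ofReal_re]

lemma sum_sq_norm_repr (x : E) : ∑ j, ‖b.repr x j‖ ^ 2 = ‖x‖ ^ 2 := by
  simpa only [b.repr_apply_apply] using b.sum_sq_norm_inner_right x

section Preorder

variable [Preorder ι]

lemma re_inner_map_self_le_of_mem_span_Iic (hμ : Monotone μ)
    (hb : ∀ j, T (b j) = (μ j : 𝕜) • b j) {i : ι} {x : E} (hx : x ∈ span 𝕜 (b '' Set.Iic i)) :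
    RCLike.re ⟪x, T x⟫_𝕜 ≤ μ i * ‖x‖ ^ 2 := by
  rw [b.re_inner_map_self_eq_sum hb, ← b.sum_sq_norm_repr, Finset.mul_sum]
  refine Finset.sum_le_sum fun j _ => ?_
  by_cases hj : j ≤ i
  · exact mul_le_mul_of_nonneg_right (hμ hj) (by positivity)
  · simp [(b.mem_span_image_iff_repr_eq_zero).1 hx j hj]

lemma mul_sq_norm_le_re_inner_map_self_of_mem_span_Ici (hμ : Monotone μ)
    (hb : ∀ j, T (b j) = (μ j : 𝕜) • b j) {i : ι} {x : E}
    (hx : x ∈ span 𝕜 (b '' Set.Ici i)) : μ i * ‖x‖ ^ 2 ≤ RCLike.re ⟪x, T x⟫_𝕜 := by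
  rw [b.re_inner_map_self_eq_sum hb, ← b.sum_sq_norm_repr, Finset.mul_sum]
  refine Finset.sum_le_sum fun j _ => ?_
  by_cases hj : i ≤ j
  · exact mul_le_mul_of_nonneg_right (hμ hj) (by positivity)
  · simp [(b.mem_span_image_iff_repr_eq_zero).1 hx j hj]

end Preorder

end OrthonormalBasis

section MinMax

variable {𝕜 E : Type*} [RCLike 𝕜] [NormedAddCommGroup E] [InnerProductSpace 𝕜 E] {n : ℕ}
  {T T' : E →ₗ[𝕜] E} {μ μ' : Fin n → ℝ} {b b' : OrthonormalBasis (Fin n) 𝕜 E}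

lemma eigenvalue_le_of_lt_finrank (hμ : Monotone μ) (hb : ∀ j, T (b j) = (μ j : 𝕜) • b j)
    {i : Fin n} {S : Submodule 𝕜 E} (hS : (i : ℕ) < finrank 𝕜 S) {c : ℝ}
    (hc : ∀ x ∈ S, RCLike.re ⟪x, T x⟫_𝕜 ≤ c * ‖x‖ ^ 2) : μ i ≤ c := by
  have : FiniteDimensional 𝕜 E := b.toBasis.finiteDimensional_of_finite
  have hE : finrank 𝕜 E = n := by rw [finrank_eq_card_basis b.toBasis, Fintype.card_fin]
  have hQ : finrank 𝕜 (span 𝕜 (b '' Set.Ici i)) = n - i := by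
    rw [← Finset.coe_Ici, b.finrank_span_image, Fin.card_Ici]
  obtain ⟨x, hxS, hxQ, hx0⟩ : ∃ x ∈ S, x ∈ span 𝕜 (b '' Set.Ici i) ∧ x ≠ 0 := by
    by_contra! h
    have := finrank_add_finrank_le_of_disjoint (disjoint_def.2 h)
    omega
  have hx : 0 < ‖x‖ ^ 2 := by positivity
  exact le_of_mul_le_mul_right
    ((b.mul_sq_norm_le_re_inner_map_self_of_mem_span_Ici hμ hb hxQ).trans (hc x hxS)) hx

lemma eigenvalue_le_of_re_inner_le (hμ : Monotone μ) (hb : ∀ j, T (b j) = (μ j : 𝕜) • b j)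
    (hμ' : Monotone μ') (hb' : ∀ j, T' (b' j) = (μ' j : 𝕜) • b' j)
    (hTT' : ∀ x, RCLike.re ⟪x, T x⟫_𝕜 ≤ RCLike.re ⟪x, T' x⟫_𝕜) (i : Fin n) : μ i ≤ μ' i := by
  refine eigenvalue_le_of_lt_finrank hμ hb (S := span 𝕜 (b' '' Set.Iic i)) ?_ fun x hx =>
    (hTT' x).trans (b'.re_inner_map_self_le_of_mem_span_Iic hμ' hb' hx)
  rw [← Finset.coe_Iic, b'.finrank_span_image, Fin.card_Iic]
  omega

lemma finrank_le_finrank_inf_ker_add_one {K V : Type*} [Field K] [AddCommGroup V] [Module K V]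
    [FiniteDimensional K V] (S : Submodule K V) (f : Module.Dual K V) :
    finrank K S ≤ finrank K ↥(S ⊓ LinearMap.ker f) + 1 := by
  have hf := f.finrank_range_add_finrank_ker
  have hrange : finrank K (LinearMap.range f) ≤ 1 :=
    (Submodule.finrank_le _).trans_eq (finrank_self K)
  have hsup := Submodule.finrank_le (S ⊔ LinearMap.ker f)
  have := Submodule.finrank_sup_add_finrank_inf_eq S (LinearMap.ker f)
  omega

lemma eigenvalue_le_succ_of_re_inner_eqOn_ker (hμ : Monotone μ)
    (hb : ∀ j, T (b j) = (μ j : 𝕜) • b j) (hμ' : Monotone μ')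
    (hb' : ∀ j, T' (b' j) = (μ' j : 𝕜) • b' j) (f : Module.Dual 𝕜 E)
    (hTT' : ∀ x ∈ LinearMap.ker f, RCLike.re ⟪x, T' x⟫_𝕜 = RCLike.re ⟪x, T x⟫_𝕜)
    (i : Fin n) (hi : (i : ℕ) + 1 < n) : μ' i ≤ μ ⟨i + 1, hi⟩ := by
  have : FiniteDimensional 𝕜 E := b.toBasis.finiteDimensional_of_finite
  set P := span 𝕜 (b '' Set.Iic ⟨i + 1, hi⟩) with hP_def
  have hP : finrank 𝕜 P = i + 2 := by
    rw [hP_def, ← Finset.coe_Iic, b.finrank_span_image, Fin.card_Iic]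
  refine eigenvalue_le_of_lt_finrank hμ' hb' (S := P ⊓ LinearMap.ker f) ?_ fun x hx => ?_
  · have := finrank_le_finrank_inf_ker_add_one P f
    omega
  · rw [hTT' x hx.2]
    exact b.re_inner_map_self_le_of_mem_span_Iic hμ hb hx.1

end MinMax

lemma Matrix.IsHermitian.toEuclideanLin_eigenvectorBasis {𝕜 n : Type*} [RCLike 𝕜] [Fintype n]
    [DecidableEq n] {A : Matrix n n 𝕜} (hA : A.IsHermitian) (j : n) :
    toEuclideanLin A (hA.eigenvectorBasis j) = (hA.eigenvalues j : 𝕜) • hA.eigenvectorBasis j := by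
  rw [Matrix.toLpLin_apply, hA.mulVec_eigenvectorBasis, RCLike.real_smul_eq_coe_smul (K := 𝕜)]
  rfl

lemma Matrix.toEuclideanLin_vecMulVec_star {𝕜 n : Type*} [RCLike 𝕜] [Fintype n]
    [DecidableEq n] (v : n → 𝕜) :
    toEuclideanLin (vecMulVec v (star v)) = rankOne 𝕜 (WithLp.toLp 2 v) (WithLp.toLp 2 v) := by
  rw [← LinearEquiv.eq_symm_apply, symm_toEuclideanLin_rankOne]

lemma re_inner_add_smul_rankOne_self {𝕜 E : Type*} [RCLike 𝕜] [NormedAddCommGroup E]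
    [InnerProductSpace 𝕜 E] (T : E →ₗ[𝕜] E) (d : ℝ) (w x : E) :
    RCLike.re ⟪x, (T + (d : 𝕜) • (rankOne 𝕜 w w : E →ₗ[𝕜] E)) x⟫_𝕜 =
      RCLike.re ⟪x, T x⟫_𝕜 + d * ‖⟪w, x⟫_𝕜‖ ^ 2 := by
  simp only [LinearMap.add_apply, LinearMap.smul_apply, ContinuousLinearMap.coe_coe, rankOne_apply,
    inner_add_right, inner_smul_right, map_add]
  rw [← inner_conj_symm w x, RCLike.conj_mul, RCLike.norm_conj, ← RCLike.ofReal_pow,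
    ← RCLike.ofReal_mul, RCLike.ofReal_re]

/-- Weyl's interlacing inequalities for a rank-one positive perturbation
`B = A + d v v*` of a Hermitian matrix `A`: the sorted eigenvalues satisfy
`λ₁(A) ≤ λ₁(B) ≤ λ₂(A) ≤ ⋯ ≤ λ_N(A) ≤ λ_N(B)`. -/
theorem rank_one_interlacing {N : ℕ}
    (A : Matrix (Fin N) (Fin N) ℂ) (hA : A.IsHermitian)
    (d : ℝ) (hd : 0 < d) (v : Fin N → ℂ)
    (B : Matrix (Fin N) (Fin N) ℂ)
    (hB : B = A + (d : ℂ) • Matrix.vecMulVec v (star v))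
    (hBh : B.IsHermitian)
    (α β : Fin N → ℝ) (hαm : Monotone α) (hβm : Monotone β)
    (hα : ∃ e : Equiv.Perm (Fin N), α = hA.eigenvalues ∘ e)
    (hβ : ∃ e : Equiv.Perm (Fin N), β = hBh.eigenvalues ∘ e) :
    (∀ i : Fin N, α i ≤ β i) ∧
      ∀ i : Fin N, ∀ h : (i : ℕ) + 1 < N, β i ≤ α ⟨(i : ℕ) + 1, h⟩ := by
  obtain ⟨eA, rfl⟩ := hα
  obtain ⟨eB, rfl⟩ := hβ
  have hbA (j : Fin N) : Matrix.toEuclideanLin A (hA.eigenvectorBasis.reindex eA.symm j) =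
      ((hA.eigenvalues ∘ eA) j : ℂ) • hA.eigenvectorBasis.reindex eA.symm j := by
    simpa using hA.toEuclideanLin_eigenvectorBasis (eA j)
  have hbB (j : Fin N) : Matrix.toEuclideanLin B (hBh.eigenvectorBasis.reindex eB.symm j) =
      ((hBh.eigenvalues ∘ eB) j : ℂ) • hBh.eigenvectorBasis.reindex eB.symm j := by
    simpa using hBh.toEuclideanLin_eigenvectorBasis (eB j)
  set w : EuclideanSpace ℂ (Fin N) := WithLp.toLp 2 v
  have hquad (x : EuclideanSpace ℂ (Fin N)) : RCLike.re ⟪x, Matrix.toEuclideanLin B x⟫_ℂ =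
      RCLike.re ⟪x, Matrix.toEuclideanLin A x⟫_ℂ + d * ‖⟪w, x⟫_ℂ‖ ^ 2 := by
    rw [hB, map_add, map_smul, Matrix.toEuclideanLin_vecMulVec_star]
    exact re_inner_add_smul_rankOne_self _ d w x
  refine ⟨eigenvalue_le_of_re_inner_le (𝕜 := ℂ) hαm hbA hβm hbB fun x => ?_, fun i hi =>
    eigenvalue_le_succ_of_re_inner_eqOn_ker (𝕜 := ℂ) hαm hbA hβm hbB (innerₛₗ ℂ w)
      (fun x hx => ?_) i hi⟩
  · rw [hquad]
    exact le_add_of_nonneg_right (by positivity)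
  · rw [hquad, show ⟪w, x⟫_ℂ = 0 from hx, norm_zero]
    ring
end

section
/- Suppose the eigenvalues of a $k\times k$ Hermitian matrix $A$ are distinct and $\langle \mathbf{v}, \mathbf{u}^{(i)}\rangle \neq 0$ for every eigenvector $\mathbf{u}^{(i)}$ of $A$, where $\mathbf{v} \in \mathbb{C}^k$. Then for every $d \in \mathbb{R} \setminus \{0\}$, the spectra of $A$ and $A + d\,\mathbf{v}\mathbf{v}^*$ are disjoint: $\sigma(A + d\,\mathbf{v}\mathbf{v}^*) \cap \sigma(A) = \emptyset$. -/
/-! If `μ` lay in both spectra, take eigenvectors `A w = μ w` and `(A + d v v*) u = μ u`. Since `μ`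
is real, `w*` is a left eigenvector of `A` for `μ`, so pairing the second equation with `w*`
cancels the `A`-terms and leaves `d ⟨w, v⟩ ⟨v, u⟩ = 0`. As `⟨v, w⟩ ≠ 0`, we get `⟨v, u⟩ = 0`; but
then `A u = μ u`, so `u` is an eigenvector of `A` orthogonal to `v`, which is excluded. -/

open Matrix

namespace Matrix

variable {n K : Type*} [Fintype n]

theorem exists_mulVec_eq_smul_of_mem_spectrum [Field K] [DecidableEq n] {A : Matrix n n K}
    {μ : K} (hμ : μ ∈ spectrum K A) : ∃ w, w ≠ 0 ∧ A *ᵥ w = μ • w := by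
  rw [← spectrum_toLin', ← Module.End.hasEigenvalue_iff_mem_spectrum] at hμ
  obtain ⟨w, hw⟩ := hμ.exists_hasEigenvector
  exact ⟨w, hw.2, hw.apply_eq_smul⟩

theorem add_smul_vecMulVec_mulVec [CommSemiring K] (A : Matrix n n K) (c : K) (v z u : n → K) :
    (A + c • vecMulVec v z) *ᵥ u = A *ᵥ u + (c * (z ⬝ᵥ u)) • v := by
  rw [add_mulVec, smul_mulVec, vecMulVec_mulVec, op_smul_eq_smul, smul_smul]

theorem dotProduct_eq_zero_of_add_smul_vecMulVec_mulVec_eq_smul [CommRing K] [NoZeroDivisors K]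
    {A : Matrix n n K} {μ c : K} {v y z u : n → K} (hc : c ≠ 0) (hy : y ᵥ* A = μ • y)
    (hyv : y ⬝ᵥ v ≠ 0) (hu : (A + c • vecMulVec v z) *ᵥ u = μ • u) : z ⬝ᵥ u = 0 := by
  have hpair := congrArg (y ⬝ᵥ ·) hu
  simp only [add_smul_vecMulVec_mulVec, dotProduct_add, dotProduct_mulVec, hy, smul_dotProduct,
    dotProduct_smul, smul_eq_mul, add_eq_left, mul_eq_zero] at hpair
  tauto

theorem IsHermitian.star_vecMul_of_mulVec_eq_smul [CommSemiring K] [StarRing K]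
    {A : Matrix n n K} (hA : A.IsHermitian) {w : n → K} {μ : K} (hw : A *ᵥ w = μ • w) :
    star w ᵥ* A = star μ • star w := by
  rw [← hA.eq, ← star_mulVec, hw, star_smul]

end Matrix

theorem rank_one_spectra_disjoint_general {k : ℕ}
    (A : Matrix (Fin k) (Fin k) ℂ) (hA : A.IsHermitian)
    (v : Fin k → ℂ)
    (hv : ∀ (μ : ℂ) (w : Fin k → ℂ), w ≠ 0 → A.mulVec w = μ • w →
      dotProduct (star v) w ≠ 0)
    (d : ℝ) (hd : d ≠ 0) :
    spectrum ℂ (A + (d : ℂ) • Matrix.vecMulVec v (star v)) ∩ spectrum ℂ A = ∅ := by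
  refine Set.eq_empty_of_forall_notMem fun μ ⟨hμB, hμA⟩ => ?_
  have hμ : star μ = μ := by
    obtain ⟨r, -, rfl⟩ := hA.spectrum_eq_image_range ▸ hμA
    exact RCLike.conj_ofReal r
  obtain ⟨w, hw0, hw⟩ := exists_mulVec_eq_smul_of_mem_spectrum hμA
  obtain ⟨u, hu0, hu⟩ := exists_mulVec_eq_smul_of_mem_spectrum hμB
  have hwv : star w ⬝ᵥ v ≠ 0 := by
    rw [star_dotProduct, star_ne_zero]
    exact hv μ w hw0 hw
  have hvu : star v ⬝ᵥ u = 0 := dotProduct_eq_zero_of_add_smul_vecMulVec_mulVec_eq_smul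
    (Complex.ofReal_ne_zero.mpr hd) (hμ ▸ hA.star_vecMul_of_mulVec_eq_smul hw) hwv hu
  rw [add_smul_vecMulVec_mulVec, hvu, mul_zero, zero_smul, add_zero] at hu
  exact hv μ u hu0 hu hvu

/-- If a Hermitian matrix `A` has distinct eigenvalues and `⟨v, u⟩ ≠ 0` for every
eigenvector `u` of `A`, then for every `d ≠ 0` the spectra of `A` and
`A + d v v*` are disjoint. -/
theorem rank_one_spectra_disjoint {k : ℕ}
    (A : Matrix (Fin k) (Fin k) ℂ) (hA : A.IsHermitian)
    (hdist : Function.Injective hA.eigenvalues)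
    (v : Fin k → ℂ)
    (hv : ∀ (μ : ℂ) (w : Fin k → ℂ), w ≠ 0 → A.mulVec w = μ • w →
      dotProduct (star v) w ≠ 0)
    (d : ℝ) (hd : d ≠ 0) :
    spectrum ℂ (A + (d : ℂ) • Matrix.vecMulVec v (star v)) ∩ spectrum ℂ A = ∅ :=
  rank_one_spectra_disjoint_general A hA v hv d hd
end

section
/- Let $H$ be an $N\times N$ Hermitian matrix with eigenvalues $\lambda_\alpha$, let $\mathbf{v}$ be a unit vector, fix $E > \lambda_N$ and $0 < \eta \leq \eta_0 \leq E - \lambda_N$. Then $|\mathrm{Re}\, G_{\mathbf{v}\mathbf{v}}(E+i\eta) - \mathrm{Re}\, G_{\mathbf{v}\mathbf{v}}(E+i\eta_0)| \leq \mathrm{Im}\, G_{\mathbf{v}\mathbf{v}}(E+i\eta_0)$, where $G_{\mathbf{v}\mathbf{v}}(z) = \langle \mathbf{v}, (H-z)^{-1}\mathbf{v}\rangle$. -/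
/-!
Diagonalising `H = U diag(λ) U*` turns `G_vv(E + iη)` into `∑ α |(U* v)_α|² / (λ_α - E - iη)`, a
combination of the scalar resolvents `(λ_α - E - iη)⁻¹` with nonnegative weights. It therefore
suffices to prove the bound for each eigenvalue separately; with `a = E - λ_α ≥ η₀ ≥ η` it reads
`a / (a² + η²) - a / (a² + η₀²) ≤ η₀ / (a² + η₀²)`, which follows from `a η₀² ≤ η₀ a²`.
-/

open Matrix Complex Unitary

lemma abs_div_sq_add_sq_sub_div_sq_add_sq_le {a η η₀ : ℝ} (hη : 0 < η) (hηη₀ : η ≤ η₀)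
    (hη₀a : η₀ ≤ a) :
    |a / (a ^ 2 + η ^ 2) - a / (a ^ 2 + η₀ ^ 2)| ≤ η₀ / (a ^ 2 + η₀ ^ 2) := by
  have ha : 0 < a := hη.trans_le (hηη₀.trans hη₀a)
  have hle : a / (a ^ 2 + η₀ ^ 2) ≤ a / (a ^ 2 + η ^ 2) := by gcongr
  rw [abs_of_nonneg (sub_nonneg.2 hle), sub_le_iff_le_add, ← add_div,
    div_le_div_iff₀ (by positivity) (by positivity)]
  nlinarith [mul_le_mul_of_nonneg_left hη₀a (mul_nonneg ha.le (hη.le.trans hηη₀))]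

namespace Complex

lemma re_inv_ofReal_sub (l E η : ℝ) :
    ((l : ℂ) - (E + η * I))⁻¹.re = -((E - l) / ((E - l) ^ 2 + η ^ 2)) := by
  simp [inv_re, normSq_apply]
  ring

lemma im_inv_ofReal_sub (l E η : ℝ) :
    ((l : ℂ) - (E + η * I))⁻¹.im = η / ((E - l) ^ 2 + η ^ 2) := by
  simp [inv_im, normSq_apply]
  ring

lemma abs_re_inv_ofReal_sub_sub_re_le_im {l E η η₀ : ℝ} (hη : 0 < η) (hηη₀ : η ≤ η₀)
    (hη₀ : η₀ ≤ E - l) :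
    |((l : ℂ) - (E + η * I))⁻¹.re - ((l : ℂ) - (E + η₀ * I))⁻¹.re| ≤
      ((l : ℂ) - (E + η₀ * I))⁻¹.im := by
  rw [re_inv_ofReal_sub, re_inv_ofReal_sub, im_inv_ofReal_sub, neg_sub_neg, abs_sub_comm]
  exact abs_div_sq_add_sq_sub_div_sq_add_sq_le hη hηη₀ hη₀

lemma abs_re_sum_sub_re_sum_le_im_sum {ι : Type*} (s : Finset ι) {c : ι → ℝ}
    (hc : ∀ i ∈ s, 0 ≤ c i) {f g : ι → ℂ} (hfg : ∀ i ∈ s, |(f i).re - (g i).re| ≤ (g i).im) :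
    |(∑ i ∈ s, (c i : ℂ) * f i).re - (∑ i ∈ s, (c i : ℂ) * g i).re| ≤
      (∑ i ∈ s, (c i : ℂ) * g i).im := by
  simp only [re_sum, im_sum, re_ofReal_mul, im_ofReal_mul, ← Finset.sum_sub_distrib, ← mul_sub]
  refine (Finset.abs_sum_le_sum_abs _ _).trans (Finset.sum_le_sum fun i hi ↦ ?_)
  rw [abs_mul, abs_of_nonneg (hc i hi)]
  exact mul_le_mul_of_nonneg_left (hfg i hi) (hc i hi)

end Complex

section

variable {n : Type*} [Fintype n] [DecidableEq n]

lemma star_dotProduct_conjStarAlgAut_diagonal_mulVec (U : unitary (Matrix n n ℂ)) (d v : n → ℂ) :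
    star v ⬝ᵥ conjStarAlgAut ℂ _ U (diagonal d) *ᵥ v =
      ∑ i, (normSq ((star (U : Matrix n n ℂ) *ᵥ v) i) : ℂ) * d i := by
  set w := star (U : Matrix n n ℂ) *ᵥ v
  have hw : star v ᵥ* (U : Matrix n n ℂ) = star w := by
    simp [w, star_mulVec, star_eq_conjTranspose]
  rw [conjStarAlgAut_apply, ← mulVec_mulVec, ← mulVec_mulVec, dotProduct_mulVec, hw]
  refine Finset.sum_congr rfl fun i _ ↦ ?_
  rw [mulVec_diagonal, Pi.star_apply, RCLike.star_def, ← mul_conj, mul_comm (w i)]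
  ring

namespace Matrix.IsHermitian

variable {H : Matrix n n ℂ} (hH : H.IsHermitian)

lemma sub_smul_one_eq_conjStarAlgAut (z : ℂ) :
    H - z • 1 = conjStarAlgAut ℂ _ hH.eigenvectorUnitary
      (diagonal fun i ↦ (hH.eigenvalues i : ℂ) - z) := by
  conv_lhs => rw [hH.spectral_theorem]
  rw [← diagonal_sub, map_sub, ← smul_one_eq_diagonal, map_smul, map_one]
  rfl

lemma inv_sub_smul_one_eq_conjStarAlgAut {z : ℂ} (hz : ∀ i, (hH.eigenvalues i : ℂ) ≠ z) :
    (H - z • 1)⁻¹ = conjStarAlgAut ℂ _ hH.eigenvectorUnitary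
      (diagonal fun i ↦ ((hH.eigenvalues i : ℂ) - z)⁻¹) := by
  refine inv_eq_right_inv ?_
  rw [hH.sub_smul_one_eq_conjStarAlgAut, ← map_mul, diagonal_mul_diagonal,
    ← map_one (conjStarAlgAut ℂ _ hH.eigenvectorUnitary), ← diagonal_one]
  congr 2
  exact funext fun i ↦ mul_inv_cancel₀ (sub_ne_zero.2 (hz i))

lemma star_dotProduct_inv_sub_smul_one_mulVec (v : n → ℂ) {z : ℂ}
    (hz : ∀ i, (hH.eigenvalues i : ℂ) ≠ z) :
    star v ⬝ᵥ (H - z • 1)⁻¹ *ᵥ v =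
      ∑ i, (normSq ((star (hH.eigenvectorUnitary : Matrix n n ℂ) *ᵥ v) i) : ℂ) *
        ((hH.eigenvalues i : ℂ) - z)⁻¹ := by
  rw [hH.inv_sub_smul_one_eq_conjStarAlgAut hz, star_dotProduct_conjStarAlgAut_diagonal_mulVec]

end Matrix.IsHermitian

end

theorem re_Gvv_difference_bound_general {N : ℕ}
    (H : Matrix (Fin N) (Fin N) ℂ) (hH : H.IsHermitian)
    (v : Fin N → ℂ)
    (E η η₀ : ℝ) (hη : 0 < η) (hηη : η ≤ η₀)
    (hE : ∀ i : Fin N, η₀ ≤ E - hH.eigenvalues i) :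
    |(dotProduct (star v)
        (Matrix.mulVec (H - ((E : ℂ) + η * Complex.I) • 1)⁻¹ v)).re -
      (dotProduct (star v)
        (Matrix.mulVec (H - ((E : ℂ) + η₀ * Complex.I) • 1)⁻¹ v)).re| ≤
      (dotProduct (star v)
        (Matrix.mulVec (H - ((E : ℂ) + η₀ * Complex.I) • 1)⁻¹ v)).im := by
  have hz : ∀ t : ℝ, 0 < t → ∀ i, (hH.eigenvalues i : ℂ) ≠ E + t * I := fun t ht i h ↦
    ht.ne (by simpa using congrArg im h)
  rw [hH.star_dotProduct_inv_sub_smul_one_mulVec v (hz η hη),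
    hH.star_dotProduct_inv_sub_smul_one_mulVec v (hz η₀ (hη.trans_le hηη))]
  exact abs_re_sum_sub_re_sum_le_im_sum _ (fun i _ ↦ normSq_nonneg _)
    fun i _ ↦ abs_re_inv_ofReal_sub_sub_re_le_im hη hηη (hE i)

/-- For a Hermitian matrix `H` with all eigenvalues below `E`, a unit vector `v`,
and `0 < η ≤ η₀ ≤ E - λ_max`, one has
`|Re G_vv(E + iη) - Re G_vv(E + iη₀)| ≤ Im G_vv(E + iη₀)`. -/
theorem re_Gvv_difference_bound {N : ℕ}
    (H : Matrix (Fin N) (Fin N) ℂ) (hH : H.IsHermitian)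
    (v : Fin N → ℂ) (hv : ∑ i, ‖v i‖ ^ 2 = 1)
    (E η η₀ : ℝ) (hη : 0 < η) (hηη : η ≤ η₀)
    (hE : ∀ i : Fin N, η₀ ≤ E - hH.eigenvalues i) :
    |(dotProduct (star v)
        (Matrix.mulVec (H - ((E : ℂ) + η * Complex.I) • 1)⁻¹ v)).re -
      (dotProduct (star v)
        (Matrix.mulVec (H - ((E : ℂ) + η₀ * Complex.I) • 1)⁻¹ v)).re| ≤
      (dotProduct (star v)
        (Matrix.mulVec (H - ((E : ℂ) + η₀ * Complex.I) • 1)⁻¹ v)).im :=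
  re_Gvv_difference_bound_general H hH v E η η₀ hη hηη hE
end
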